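/- arXiv:math/0701939 — 2 statements merged into one kernel-verified Lean document; each statement's English description precedes it below -/
import Mathlib

section
/- For f, g ∈ L^p(ℝ^m) with 1 ≤ p < ∞, the double integral of |g(y-x)f(x) - g(x-y)f(y)|^p over ℝ^m × ℝ^m is at least (∫_{ℝ^m} | |g(y)| - |g(-y)| |^p dy) · (∫_{ℝ^m} |f(x)|^p dx). -/
open Real MeasureTheory
open scoped ENNReal

/-!
After the substitution `y = x + z`, the inner integral at fixed `z` is
`‖g z • f - g (-z) • f (· + z)‖_p ^ p`. Since translation preserves `‖f‖_p`, the reverse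
Minkowski inequality bounds this below by `| ‖g z‖ - ‖g (-z)‖ | ^ p * ‖f‖_p ^ p`; integrating
in `z` gives the claim.
-/

namespace MeasureTheory

section ReverseMinkowski

variable {α E 𝕜 : Type*} [MeasurableSpace α] {μ : Measure α} [NormedAddCommGroup E]
  {p : ℝ≥0∞} {u v : α → E}

theorem lintegral_enorm_rpow_eq_eLpNorm_rpow {p : ℝ} (hp : 0 < p) (u : α → E) :
    ∫⁻ x, ‖u x‖ₑ ^ p ∂μ = eLpNorm u (ENNReal.ofReal p) μ ^ p := by
  rw [eLpNorm_eq_eLpNorm' (by simpa using hp) ENNReal.ofReal_ne_top, ENNReal.toReal_ofReal hp.le,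
    lintegral_rpow_enorm_eq_rpow_eLpNorm' hp]

theorem eLpNorm_sub_eLpNorm_le (hu : AEStronglyMeasurable u μ) (hv : AEStronglyMeasurable v μ)
    (hp : 1 ≤ p) : eLpNorm u p μ - eLpNorm v p μ ≤ eLpNorm (u - v) p μ :=
  tsub_le_iff_right.mpr <| by simpa using eLpNorm_add_le (hu.sub hv) hv hp

variable [NormedField 𝕜] [NormedSpace 𝕜 E]

theorem enorm_sub_enorm_mul_eLpNorm_le (a b : 𝕜) (hu : AEStronglyMeasurable u μ)
    (hv : AEStronglyMeasurable v μ) (hp : 1 ≤ p) (huv : eLpNorm u p μ = eLpNorm v p μ)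
    (hu_fin : eLpNorm u p μ ≠ ∞) :
    (‖a‖ₑ - ‖b‖ₑ) * eLpNorm u p μ ≤ eLpNorm (a • u - b • v) p μ :=
  calc (‖a‖ₑ - ‖b‖ₑ) * eLpNorm u p μ = eLpNorm (a • u) p μ - eLpNorm (b • v) p μ := by
        rw [ENNReal.sub_mul fun _ _ ↦ hu_fin, eLpNorm_const_smul, eLpNorm_const_smul, huv]
    _ ≤ eLpNorm (a • u - b • v) p μ :=
        eLpNorm_sub_eLpNorm_le (hu.const_smul a) (hv.const_smul b) hp

theorem ofReal_abs_norm_sub_norm_mul_eLpNorm_le (a b : 𝕜) (hu : AEStronglyMeasurable u μ)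
    (hv : AEStronglyMeasurable v μ) (hp : 1 ≤ p) (huv : eLpNorm u p μ = eLpNorm v p μ)
    (hu_fin : eLpNorm u p μ ≠ ∞) :
    ENNReal.ofReal |‖a‖ - ‖b‖| * eLpNorm u p μ ≤ eLpNorm (a • u - b • v) p μ := by
  rcases le_total ‖b‖ ‖a‖ with hba | hab
  · rw [abs_of_nonneg (sub_nonneg.2 hba), ENNReal.ofReal_sub _ (norm_nonneg _), ofReal_norm,
      ofReal_norm]
    exact enorm_sub_enorm_mul_eLpNorm_le a b hu hv hp huv hu_fin
  · rw [abs_sub_comm, abs_of_nonneg (sub_nonneg.2 hab), ENNReal.ofReal_sub _ (norm_nonneg _),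
      ofReal_norm, ofReal_norm, eLpNorm_sub_comm, huv]
    exact enorm_sub_enorm_mul_eLpNorm_le b a hv hu hp huv.symm (huv ▸ hu_fin)

end ReverseMinkowski

section Translation

variable {G E 𝕜 : Type*} [MeasurableSpace G] [AddGroup G] [NormedAddCommGroup E]
  [NormedField 𝕜] [NormedSpace 𝕜 E]

theorem ofReal_abs_norm_sub_norm_rpow_mul_lintegral_le [MeasurableAdd G] {μ : Measure G}
    [μ.IsAddRightInvariant] {p : ℝ} (hp : 1 ≤ p) (a b : 𝕜) {f : G → E}
    (hf : MemLp f (ENNReal.ofReal p) μ) (z : G) :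
    ENNReal.ofReal (|‖a‖ - ‖b‖| ^ p) * ∫⁻ x, ‖f x‖ₑ ^ p ∂μ ≤
      ∫⁻ x, ‖a • f x - b • f (x + z)‖ₑ ^ p ∂μ := by
  have hp0 : 0 < p := zero_lt_one.trans_le hp
  have hτ := measurePreserving_add_right μ z
  have key := ofReal_abs_norm_sub_norm_mul_eLpNorm_le a b hf.1 (hf.1.comp_measurePreserving hτ)
    (ENNReal.one_le_ofReal.2 hp) (eLpNorm_comp_measurePreserving hf.1 hτ).symm hf.eLpNorm_ne_top
  rw [lintegral_enorm_rpow_eq_eLpNorm_rpow hp0, lintegral_enorm_rpow_eq_eLpNorm_rpow hp0,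
    ← ENNReal.ofReal_rpow_of_nonneg (abs_nonneg _) hp0.le,
    ← ENNReal.mul_rpow_of_nonneg _ _ hp0.le]
  exact ENNReal.rpow_le_rpow key hp0.le

theorem lintegral_lintegral_eq_lintegral_lintegral_add [MeasurableAdd G] {μ ν : Measure G}
    [SFinite μ] [SFinite ν] [ν.IsAddLeftInvariant] (F : G → G → ℝ≥0∞)
    (hF : AEMeasurable (fun q : G × G ↦ F q.1 (q.1 + q.2)) (μ.prod ν)) :
    ∫⁻ x, ∫⁻ y, F x y ∂ν ∂μ = ∫⁻ z, ∫⁻ x, F x (x + z) ∂μ ∂ν :=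
  calc ∫⁻ x, ∫⁻ y, F x y ∂ν ∂μ = ∫⁻ x, ∫⁻ z, F x (x + z) ∂ν ∂μ :=
        lintegral_congr fun x ↦ (lintegral_add_left_eq_self (F x) x).symm
    _ = ∫⁻ z, ∫⁻ x, F x (x + z) ∂μ ∂ν := lintegral_lintegral_swap hF

theorem aemeasurable_enorm_smul_sub_smul_add_rpow [MeasurableAdd₂ G] [MeasurableNeg G]
    {μ : Measure G} [SFinite μ] [μ.IsAddLeftInvariant] {f : G → E} {g : G → 𝕜}
    (hf : AEStronglyMeasurable f μ) (hg : AEStronglyMeasurable g μ) (p : ℝ) :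
    AEMeasurable (fun q : G × G ↦ ‖g q.2 • f q.1 - g (-q.2) • f (q.1 + q.2)‖ₑ ^ p)
      (μ.prod μ) := by
  have hg_snd := hg.comp_quasiMeasurePreserving (Measure.quasiMeasurePreserving_snd (μ := μ))
  have hf_fst := hf.comp_quasiMeasurePreserving (Measure.quasiMeasurePreserving_fst (ν := μ))
  have hg_neg_snd := hg.comp_quasiMeasurePreserving
    ((quasiMeasurePreserving_neg μ).comp (Measure.quasiMeasurePreserving_snd (μ := μ)))
  have hf_add := hf.comp_quasiMeasurePreserving (quasiMeasurePreserving_add μ μ)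
  exact ((hg_snd.smul hf_fst).sub (hg_neg_snd.smul hf_add)).enorm.pow_const p

end Translation

end MeasureTheory

theorem nonlinear_stein_weiss_lemma (m : ℕ) (p : ℝ) (hp : 1 ≤ p)
    (f g : EuclideanSpace ℝ (Fin m) → ℂ)
    (hf : MemLp f (ENNReal.ofReal p) volume) (hg : MemLp g (ENNReal.ofReal p) volume) :
    (∫⁻ x : EuclideanSpace ℝ (Fin m), ∫⁻ y : EuclideanSpace ℝ (Fin m),
        (‖g (y - x) * f x - g (x - y) * f y‖₊ : ENNReal) ^ p) ≥
      (∫⁻ y : EuclideanSpace ℝ (Fin m), ENNReal.ofReal (|‖g y‖ - ‖g (-y)‖| ^ p)) *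
        ∫⁻ x : EuclideanSpace ℝ (Fin m), (‖f x‖₊ : ENNReal) ^ p := by
  have hp0 : 0 < p := zero_lt_one.trans_le hp
  have hf_fin : ∫⁻ x, ‖f x‖ₑ ^ p ≠ ∞ := by
    rw [lintegral_enorm_rpow_eq_eLpNorm_rpow hp0]
    exact ENNReal.rpow_ne_top_of_nonneg hp0.le hf.eLpNorm_ne_top
  calc (∫⁻ z, ENNReal.ofReal (|‖g z‖ - ‖g (-z)‖| ^ p)) * ∫⁻ x, ‖f x‖ₑ ^ p
      = ∫⁻ z, ENNReal.ofReal (|‖g z‖ - ‖g (-z)‖| ^ p) * ∫⁻ x, ‖f x‖ₑ ^ p :=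
        (lintegral_mul_const' _ _ hf_fin).symm
    _ ≤ ∫⁻ z, ∫⁻ x, ‖g z • f x - g (-z) • f (x + z)‖ₑ ^ p :=
        lintegral_mono fun z ↦ ofReal_abs_norm_sub_norm_rpow_mul_lintegral_le hp _ _ hf z
    _ = ∫⁻ x, ∫⁻ y, ‖g (y - x) * f x - g (x - y) * f y‖ₑ ^ p := by
        have hF := aemeasurable_enorm_smul_sub_smul_add_rpow hf.1 hg.1 p
        simp only [smul_eq_mul] at hF ⊢
        rw [lintegral_lintegral_eq_lintegral_lintegral_add
          (fun x y ↦ ‖g (y - x) * f x - g (x - y) * f y‖ₑ ^ p)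
          (by simpa only [add_sub_cancel_left, sub_add_cancel_left] using hF)]
        simp only [add_sub_cancel_left, sub_add_cancel_left]
end

section
/- For 0 < α < min(2, n), the function σ ↦ Γ((n+α)/4 - σ/2) Γ((n+α)/4 + σ/2) / [Γ((n-α)/4 + σ/2) Γ((n-α)/4 - σ/2)], defined for -(n-α)/2 < σ < (n-α)/2, is symmetric in σ, concave, and attains its maximum at σ = 0, where its value is [Γ((n+α)/4)/Γ((n-α)/4)]². -/
/-!
Write `a = (n + α) / 4`, `b = (n - α) / 4`, `s = σ / 2` and `c = a - b = α / 2 ∈ [0, 1]`.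
The function is `φ (b - s) * φ (b + s)` with `φ x = Γ (x + c) / Γ x`. By Euler's limit formula,
`φ` is the pointwise limit of `m ^ c * ∏_{k ≤ m} (x + k) / (x + k + c)`, and partial fractions
turn each product into `1 - ∑ e_j / (x + j + c)` with `e_j ≥ 0`. Hence `φ` is nonnegative,
concave and monotone on `(0, ∞)`, so `s ↦ φ (b - s)` and `s ↦ φ (b + s)` are nonnegative concave
functions varying in opposite directions, and their product is concave. Being even, it is
maximal at `s = 0`.
-/

open Real Set Filter Topology Finset

section Limits

variable {ι E : Type*} {l : Filter ι} [l.NeBot] {F : ι → E → ℝ} {f : E → ℝ}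

theorem concaveOn_of_tendsto [AddCommGroup E] [Module ℝ E] {s : Set E} (hs : Convex ℝ s)
    (hF : ∀ᶠ i in l, ConcaveOn ℝ s (F i))
    (hlim : ∀ x ∈ s, Tendsto (fun i => F i x) l (𝓝 (f x))) : ConcaveOn ℝ s f := by
  refine ⟨hs, fun x hx y hy p q hp hq hpq => ?_⟩
  refine le_of_tendsto_of_tendsto
    (((hlim x hx).const_smul p).add ((hlim y hy).const_smul q))
    (hlim _ (hs hx hy hp hq hpq)) ?_
  filter_upwards [hF] with i hi using hi.2 hx hy hp hq hpq

theorem monotoneOn_of_tendsto [Preorder E] {s : Set E} (hF : ∀ᶠ i in l, MonotoneOn (F i) s)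
    (hlim : ∀ x ∈ s, Tendsto (fun i => F i x) l (𝓝 (f x))) : MonotoneOn f s :=
  fun x hx y hy hxy => le_of_tendsto_of_tendsto (hlim x hx) (hlim y hy) <| by
    filter_upwards [hF] with i hi using hi hx hy hxy

end Limits

theorem ConcaveOn.le_apply_zero_of_apply_neg {E : Type*} [AddCommGroup E] [Module ℝ E]
    {s : Set E} {f : E → ℝ} (hf : ConcaveOn ℝ s f) {x : E} (hx : x ∈ s) (hnx : -x ∈ s)
    (hsymm : f (-x) = f x) : f x ≤ f 0 := by
  have h := hf.2 hx hnx (by norm_num : (0 : ℝ) ≤ 1 / 2) (by norm_num : (0 : ℝ) ≤ 1 / 2)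
    (by norm_num)
  rw [smul_neg, add_neg_cancel, hsymm, smul_eq_mul] at h
  linarith

theorem ConcaveOn.comp_div_const {f : ℝ → ℝ} {s : Set ℝ} (hf : ConcaveOn ℝ s f) (r : ℝ) :
    ConcaveOn ℝ ((· / r) ⁻¹' s) fun x => f (x / r) := by
  refine ⟨fun x hx y hy p q hp hq hpq => ?_, fun x hx y hy p q hp hq hpq => ?_⟩
  · simpa [add_div, mul_div_assoc] using hf.1 hx hy hp hq hpq
  · simpa [add_div, mul_div_assoc] using hf.2 hx hy hp hq hpq

theorem exists_prod_div_add_eq_one_sub_sum {c : ℝ} (hc0 : 0 ≤ c) (hc1 : c ≤ 1) (m : ℕ) :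
    ∃ e : ℕ → ℝ, (∀ j, 0 ≤ e j) ∧ ∀ x, 0 < x →
      ∏ k ∈ range m, (x + k) / (x + k + c) = 1 - ∑ j ∈ range m, e j / (x + j + c) := by
  induction m with
  | zero => exact ⟨0, fun _ => le_rfl, fun x _ => by simp⟩
  | succ m ih =>
    obtain ⟨e, he, hprod⟩ := ih
    -- Partial fractions
    -- `1 / ((x + j + c) (x + m + c)) = (1 / (x + j + c) - 1 / (x + m + c)) / (m - j)`;
    -- the coefficients stay nonnegative because `m - j ≥ 1 ≥ c`.
    let e' j :=
      if j < m then e j * (1 - c / (m - j)) else c * (1 + ∑ i ∈ range m, e i / (m - i))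
    have hgap : ∀ j ∈ range m, 1 ≤ (m : ℝ) - j := fun j hj => by
      have : (j : ℝ) + 1 ≤ m := by exact_mod_cast mem_range.1 hj
      linarith
    refine ⟨e', fun j => ?_, fun x hx => ?_⟩
    · by_cases hj : j < m
      · have hj' := hgap j (mem_range.2 hj)
        have : c / (m - j) ≤ 1 := div_le_one_of_le₀ (hc1.trans hj') (by linarith)
        simpa [e', hj] using mul_nonneg (he j) (sub_nonneg.2 this)
      · simp only [e', hj, if_false]
        exact mul_nonneg hc0 (add_nonneg zero_le_one (sum_nonneg fun i hi =>
          div_nonneg (he i) (by linarith [hgap i hi])))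
    · set X := x + m + c
      have hX : 0 < X := by positivity
      have hterm : ∀ j ∈ range m, e' j / (x + j + c)
          = e j / (x + j + c) * (1 - c / X) - c * (e j / (m - j)) / X := fun j hj => by
        have h1 := hgap j hj
        have : 0 < x + j + c := by positivity
        simp only [e', mem_range.1 hj, if_true]
        field_simp
        ring
      rw [prod_range_succ, hprod x hx, sum_range_succ, sum_congr rfl hterm, sum_sub_distrib,
        ← sum_mul, ← sum_div, ← mul_sum]
      simp only [e', lt_irrefl, if_false]
      field_simp
      ring

theorem convexOn_div_add {e d : ℝ} (he : 0 ≤ e) (hd : 0 ≤ d) :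
    ConvexOn ℝ (Ioi 0) fun x => e / (x + d) := by
  have h := (((convexOn_zpow (-1 : ℤ)).translate_left d).subset
    (fun x (hx : 0 < x) => show 0 < d + x by linarith) (convex_Ioi 0)).smul he
  refine h.congr fun x _ => ?_
  simp [div_eq_mul_inv]

theorem concaveOn_one_sub_sum_div {ι : Type*} (t : Finset ι) {e d : ι → ℝ}
    (he : ∀ i, 0 ≤ e i) (hd : ∀ i, 0 ≤ d i) :
    ConcaveOn ℝ (Ioi 0) fun x => 1 - ∑ i ∈ t, e i / (x + d i) := by
  have hsum : ConvexOn ℝ (Ioi 0) (∑ i ∈ t, fun x => e i / (x + d i)) :=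
    sum_induction _ (ConvexOn ℝ (Ioi 0)) (fun _ _ => ConvexOn.add)
      (convexOn_const 0 (convex_Ioi 0)) fun i _ => convexOn_div_add (he i) (hd i)
  refine ((concaveOn_const 1 (convex_Ioi 0)).sub hsum).congr fun x _ => ?_
  simp [Finset.sum_apply]

theorem monotoneOn_one_sub_sum_div {ι : Type*} (t : Finset ι) {e d : ι → ℝ}
    (he : ∀ i, 0 ≤ e i) (hd : ∀ i, 0 ≤ d i) :
    MonotoneOn (fun x => 1 - ∑ i ∈ t, e i / (x + d i)) (Ioi 0) := by
  intro x (hx : 0 < x) y _ hxy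
  dsimp only
  gcongr with i
  · exact he i
  · linarith [hd i]

theorem GammaSeq_add_div_GammaSeq {x c : ℝ} (hx : 0 < x) (hc : 0 ≤ c) {m : ℕ} (hm : m ≠ 0) :
    GammaSeq (x + c) m / GammaSeq x m =
      (m : ℝ) ^ c * ∏ k ∈ range (m + 1), (x + k) / (x + k + c) := by
  have hm' : (0 : ℝ) < m := by positivity
  have hpos : ∀ y : ℝ, 0 < y → 0 < ∏ k ∈ range (m + 1), (y + k) := fun y hy =>
    prod_pos fun k _ => by positivity
  have h1 := hpos x hx
  have h2 := hpos (x + c) (by positivity)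
  have h3 := rpow_pos_of_pos hm' x
  rw [GammaSeq, GammaSeq, rpow_add hm', prod_div_distrib]
  field_simp
  simp only [add_right_comm x c]

section GammaRatio

variable {c : ℝ}

theorem concaveOn_prod_div_add (hc0 : 0 ≤ c) (hc1 : c ≤ 1) (m : ℕ) :
    ConcaveOn ℝ (Ioi 0) fun x => ∏ k ∈ range m, (x + k) / (x + k + c) := by
  obtain ⟨e, he, hprod⟩ := exists_prod_div_add_eq_one_sub_sum hc0 hc1 m
  refine (concaveOn_one_sub_sum_div (range m) he (d := fun j => j + c)
    fun j => by positivity).congr fun x hx => ?_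
  simp only [← add_assoc, hprod x hx]

theorem monotoneOn_prod_div_add (hc0 : 0 ≤ c) (hc1 : c ≤ 1) (m : ℕ) :
    MonotoneOn (fun x => ∏ k ∈ range m, (x + k) / (x + k + c)) (Ioi 0) := by
  obtain ⟨e, he, hprod⟩ := exists_prod_div_add_eq_one_sub_sum hc0 hc1 m
  refine (monotoneOn_one_sub_sum_div (range m) he (d := fun j => j + c)
    fun j => by positivity).congr fun x hx => ?_
  simp only [← add_assoc, hprod x hx]

theorem tendsto_GammaSeq_add_div_GammaSeq {x : ℝ} (hx : 0 < x) :
    Tendsto (fun m => GammaSeq (x + c) m / GammaSeq x m) atTop (𝓝 (Gamma (x + c) / Gamma x)) :=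
  (GammaSeq_tendsto_Gamma _).div (GammaSeq_tendsto_Gamma x) (Gamma_pos_of_pos hx).ne'

theorem concaveOn_Gamma_add_div_Gamma (hc0 : 0 ≤ c) (hc1 : c ≤ 1) :
    ConcaveOn ℝ (Ioi 0) fun x => Gamma (x + c) / Gamma x := by
  refine concaveOn_of_tendsto (convex_Ioi 0) ?_ fun x hx =>
    tendsto_GammaSeq_add_div_GammaSeq hx
  filter_upwards [eventually_ne_atTop 0] with m hm
  exact ((concaveOn_prod_div_add hc0 hc1 (m + 1)).smul (by positivity)).congr fun x hx =>
    (GammaSeq_add_div_GammaSeq hx hc0 hm).symm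

theorem monotoneOn_Gamma_add_div_Gamma (hc0 : 0 ≤ c) (hc1 : c ≤ 1) :
    MonotoneOn (fun x => Gamma (x + c) / Gamma x) (Ioi 0) := by
  refine monotoneOn_of_tendsto ?_ fun x hx => tendsto_GammaSeq_add_div_GammaSeq hx
  filter_upwards [eventually_ne_atTop 0] with m hm x hx y hy hxy
  dsimp only
  rw [GammaSeq_add_div_GammaSeq hx hc0 hm, GammaSeq_add_div_GammaSeq hy hc0 hm]
  exact mul_le_mul_of_nonneg_left (monotoneOn_prod_div_add hc0 hc1 _ hx hy hxy) (by positivity)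

end GammaRatio

theorem concaveOn_mul_comp_sub_comp_add {φ : ℝ → ℝ} (hconc : ConcaveOn ℝ (Ioi 0) φ)
    (hmono : MonotoneOn φ (Ioi 0)) (hnonneg : ∀ x, 0 < x → 0 ≤ φ x) (b : ℝ) :
    ConcaveOn ℝ (Ioo (-b) b) fun s => φ (b - s) * φ (b + s) := by
  have hsub : ∀ s ∈ Ioo (-b) b, 0 < b - s := fun s hs => by linarith [hs.2]
  have hadd : ∀ s ∈ Ioo (-b) b, 0 < b + s := fun s hs => by linarith [hs.1]
  have hleft : ConcaveOn ℝ (Ioo (-b) b) fun s => φ (b - s) := by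
    refine ((hconc.comp_affineMap (AffineEquiv.constVSub ℝ b).toAffineMap).subset
      (fun s hs => hsub s hs) (convex_Ioo _ _)).congr fun s _ => ?_
    simp
  have hright : ConcaveOn ℝ (Ioo (-b) b) fun s => φ (b + s) :=
    (hconc.translate_right b).subset (fun s hs => hadd s hs) (convex_Ioo _ _)
  refine hleft.mul hright (fun s hs => hnonneg _ (hsub s hs))
    (fun s hs => hnonneg _ (hadd s hs)) ?_
  refine AntitoneOn.antivaryOn (fun s hs t ht hst => ?_) fun s hs t ht hst => ?_
  · exact hmono (hsub t ht) (hsub s hs) (by linarith)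
  · exact hmono (hadd s hs) (hadd t ht) (by linarith)

theorem concaveOn_Gamma_mul_Gamma_div_Gamma_mul_Gamma {a b : ℝ} (hba : b ≤ a)
    (hab : a ≤ b + 1) :
    ConcaveOn ℝ (Ioo (-b) b)
      fun s => Gamma (a - s) * Gamma (a + s) / (Gamma (b + s) * Gamma (b - s)) := by
  have hc0 : 0 ≤ a - b := by linarith
  have hc1 : a - b ≤ 1 := by linarith
  refine (concaveOn_mul_comp_sub_comp_add (concaveOn_Gamma_add_div_Gamma hc0 hc1)
    (monotoneOn_Gamma_add_div_Gamma hc0 hc1) (fun x hx => ?_) b).congr fun s _ => ?_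
  · exact div_nonneg (Gamma_pos_of_pos (by linarith)).le (Gamma_pos_of_pos hx).le
  · dsimp only
    rw [show b - s + (a - b) = a - s by ring, show b + s + (a - b) = a + s by ring,
      div_mul_div_comm, mul_comm (Gamma (b - s))]

theorem lambda_concavity (n : ℕ) (α : ℝ) (hα0 : 0 < α) (hα : α < min 2 (n : ℝ)) :
    (∀ σ ∈ Set.Ioo (-(((n : ℝ) - α) / 2)) (((n : ℝ) - α) / 2),
        Gamma (((n : ℝ) + α) / 4 - (-σ) / 2) * Gamma (((n : ℝ) + α) / 4 + (-σ) / 2) /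
            (Gamma (((n : ℝ) - α) / 4 + (-σ) / 2) * Gamma (((n : ℝ) - α) / 4 - (-σ) / 2)) =
          Gamma (((n : ℝ) + α) / 4 - σ / 2) * Gamma (((n : ℝ) + α) / 4 + σ / 2) /
            (Gamma (((n : ℝ) - α) / 4 + σ / 2) * Gamma (((n : ℝ) - α) / 4 - σ / 2))) ∧
    ConcaveOn ℝ (Set.Ioo (-(((n : ℝ) - α) / 2)) (((n : ℝ) - α) / 2))
      (fun σ => Gamma (((n : ℝ) + α) / 4 - σ / 2) * Gamma (((n : ℝ) + α) / 4 + σ / 2) /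
          (Gamma (((n : ℝ) - α) / 4 + σ / 2) * Gamma (((n : ℝ) - α) / 4 - σ / 2))) ∧
    (∀ σ ∈ Set.Ioo (-(((n : ℝ) - α) / 2)) (((n : ℝ) - α) / 2),
        Gamma (((n : ℝ) + α) / 4 - σ / 2) * Gamma (((n : ℝ) + α) / 4 + σ / 2) /
            (Gamma (((n : ℝ) - α) / 4 + σ / 2) * Gamma (((n : ℝ) - α) / 4 - σ / 2)) ≤
          (Gamma (((n : ℝ) + α) / 4) / Gamma (((n : ℝ) - α) / 4)) ^ 2) ∧
    Gamma (((n : ℝ) + α) / 4 - 0 / 2) * Gamma (((n : ℝ) + α) / 4 + 0 / 2) /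
        (Gamma (((n : ℝ) - α) / 4 + 0 / 2) * Gamma (((n : ℝ) - α) / 4 - 0 / 2)) =
      (Gamma (((n : ℝ) + α) / 4) / Gamma (((n : ℝ) - α) / 4)) ^ 2 := by
  have hα2 : α < 2 := hα.trans_le (min_le_left _ _)
  set A := ((n : ℝ) + α) / 4 with hA
  set B := ((n : ℝ) - α) / 4 with hB
  set f := fun σ : ℝ =>
    Gamma (A - σ / 2) * Gamma (A + σ / 2) / (Gamma (B + σ / 2) * Gamma (B - σ / 2))
  have hsymm : ∀ σ, f (-σ) = f σ := fun σ => by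
    simp only [f, neg_div, sub_neg_eq_add, ← sub_eq_add_neg]
    ring
  have hdom : Ioo (-(((n : ℝ) - α) / 2)) (((n : ℝ) - α) / 2) = (· / 2) ⁻¹' Ioo (-B) B := by
    ext σ
    simp only [Set.mem_Ioo, Set.mem_preimage, hB]
    constructor <;> rintro ⟨h₁, h₂⟩ <;> constructor <;> linarith
  have hconc : ConcaveOn ℝ (Ioo (-(((n : ℝ) - α) / 2)) (((n : ℝ) - α) / 2)) f := by
    rw [hdom]
    exact (concaveOn_Gamma_mul_Gamma_div_Gamma_mul_Gamma (a := A) (b := B) (by linarith)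
      (by linarith)).comp_div_const 2
  have hzero : f 0 = (Gamma A / Gamma B) ^ 2 := by
    simp only [f, zero_div, sub_zero, add_zero]
    ring
  refine ⟨fun σ _ => hsymm σ, hconc, fun σ hσ => hzero ▸ ?_, hzero⟩
  exact hconc.le_apply_zero_of_apply_neg hσ ⟨by linarith [hσ.2], by linarith [hσ.1]⟩ (hsymm σ)
end
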